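/- arXiv:1408.2076 — 6 statements merged into one kernel-verified Lean document; each statement's English description precedes it below -/
import Mathlib

section
/- The range of b_d(x) = Σ_{j=1}^d cos x_j + Σ_{1≤j<k≤d} cos(x_j - x_k) over the real torus T^d is the closed interval [-(d+1)/2, d(d+1)/2]. -/
open Finset Real

lemma swap_sum (d : ℕ) (x : Fin d → ℝ) :
    ∑ p ∈ Finset.univ.filter (fun p : Fin d × Fin d => p.2 < p.1), Real.cos (x p.1 - x p.2)
  = ∑ p ∈ Finset.univ.filter (fun p : Fin d × Fin d => p.1 < p.2), Real.cos (x p.1 - x p.2) := by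
  apply Finset.sum_equiv (Equiv.prodComm (Fin d) (Fin d))
  · intro p; simp
  · intro p hp
    simp only [Equiv.prodComm_apply, Prod.snd_swap, Prod.fst_swap]
    rw [← Real.cos_neg]; ring_nf

lemma double_sum (d : ℕ) (x : Fin d → ℝ) :
    ∑ p : Fin d × Fin d, Real.cos (x p.1 - x p.2)
  = d + 2 * ∑ p ∈ Finset.univ.filter (fun p : Fin d × Fin d => p.1 < p.2),
      Real.cos (x p.1 - x p.2) := by
  classical
  rw [← Finset.sum_filter_add_sum_filter_not Finset.univ (fun p : Fin d × Fin d => p.1 < p.2)]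
  rw [← Finset.sum_filter_add_sum_filter_not
      (Finset.univ.filter (fun p : Fin d × Fin d => ¬ p.1 < p.2))
      (fun p : Fin d × Fin d => p.2 < p.1)]
  have h1 : (Finset.univ.filter (fun p : Fin d × Fin d => ¬ p.1 < p.2)).filter
      (fun p : Fin d × Fin d => p.2 < p.1)
      = Finset.univ.filter (fun p : Fin d × Fin d => p.2 < p.1) := by
    ext p; simp only [Finset.mem_filter, Finset.mem_univ, true_and]
    constructor
    · rintro ⟨_, h⟩; exact h
    · intro h; exact ⟨asymm h, h⟩
  have h2 : (Finset.univ.filter (fun p : Fin d × Fin d => ¬ p.1 < p.2)).filter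
      (fun p : Fin d × Fin d => ¬ p.2 < p.1)
      = Finset.univ.filter (fun p : Fin d × Fin d => p.1 = p.2) := by
    ext p; simp only [Finset.mem_filter, Finset.mem_univ, true_and]
    constructor
    · rintro ⟨h1, h2⟩; exact le_antisymm (not_lt.1 h2) (not_lt.1 h1)
    · rintro h; rw [h]; simp
  rw [h1, h2, swap_sum]
  have h3 : ∑ p ∈ Finset.univ.filter (fun p : Fin d × Fin d => p.1 = p.2),
      Real.cos (x p.1 - x p.2) = d := by
    have hall : ∀ p ∈ Finset.univ.filter (fun p : Fin d × Fin d => p.1 = p.2),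
        Real.cos (x p.1 - x p.2) = 1 := by
      intro p hp
      have : p.1 = p.2 := by simpa using (Finset.mem_filter.1 hp).2
      rw [this, sub_self, Real.cos_zero]
    have hdiag : (Finset.univ.filter (fun p : Fin d × Fin d => p.1 = p.2))
        = (Finset.univ : Finset (Fin d)).diag := by
      ext p; simp [Finset.mem_diag]
    rw [Finset.sum_congr rfl hall, Finset.sum_const, hdiag, Finset.diag_card]; simp
  rw [h3]; ring

lemma key (d : ℕ) (x : Fin d → ℝ) :
    ∑ j, Real.cos (x j)
      + ∑ p ∈ Finset.univ.filter (fun p : Fin d × Fin d => p.1 < p.2),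
          Real.cos (x p.1 - x p.2)
    = ((1 + ∑ j, Real.cos (x j))^2 + (∑ j, Real.sin (x j))^2 - (d+1))/2 := by
  have hCS : (∑ j, Real.cos (x j))^2 + (∑ j, Real.sin (x j))^2
      = ∑ p : Fin d × Fin d, Real.cos (x p.1 - x p.2) := by
    have e1 : ∀ (f g : Fin d → ℝ),
        (∑ j, f j) * (∑ j, g j) = ∑ p : Fin d × Fin d, f p.1 * g p.2 := by
      intro f g
      rw [Finset.sum_mul_sum, ← Finset.univ_product_univ, Finset.sum_product]
    simp only [Real.cos_sub]
    rw [Finset.sum_add_distrib, sq, sq, e1, e1]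
  have := double_sum d x
  rw [← hCS] at this
  nlinarith [this]

lemma card_filter (d : ℕ) :
    2 * ((Finset.univ.filter (fun p : Fin d × Fin d => p.1 < p.2)).card : ℝ)
      = d^2 - d := by
  have := double_sum d (fun _ => 0)
  simp only [sub_self, Real.cos_zero, Finset.sum_const, nsmul_eq_mul, mul_one] at this
  have hcard : (Finset.univ : Finset (Fin d × Fin d)).card = d * d := by simp
  rw [hcard] at this
  push_cast at this ⊢
  nlinarith [this]

lemma roots_sum (d : ℕ) (hd : 1 ≤ d) :
    1 + ∑ j : Fin d, Real.cos (((j:ℝ)+1) * (2 * Real.pi / (d+1))) = 0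
    ∧ ∑ j : Fin d, Real.sin (((j:ℝ)+1) * (2 * Real.pi / (d+1))) = 0 := by
  have hn : (d+1 : ℕ) ≠ 0 := by omega
  have hprim := Complex.isPrimitiveRoot_exp (d+1) hn
  have hsum := hprim.geom_sum_eq_zero (by omega)
  push_cast at hsum
  have hexp : ∀ i : ℕ, Complex.exp (2 * Real.pi * Complex.I / (d+1)) ^ i
      = Complex.exp (((i : ℝ) * (2 * Real.pi / (d+1)) : ℝ) * Complex.I) := by
    intro i
    rw [← Complex.exp_nat_mul]
    congr 1
    push_cast
    field_simp
  rw [Finset.sum_congr rfl (fun i _ => hexp i)] at hsum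
  have hre := congrArg Complex.re hsum
  have him := congrArg Complex.im hsum
  rw [Complex.re_sum] at hre
  rw [Complex.im_sum] at him
  simp only [Complex.exp_ofReal_mul_I_re, Complex.exp_ofReal_mul_I_im, Complex.zero_re,
    Complex.zero_im] at hre him
  rw [Finset.sum_range_succ'] at hre him
  simp only [Nat.cast_zero, zero_mul, Real.cos_zero, Real.sin_zero, add_zero] at hre him
  rw [Fin.sum_univ_eq_sum_range (fun j => Real.cos (((j:ℝ)+1) * (2 * Real.pi / (d+1)))),
      Fin.sum_univ_eq_sum_range (fun j => Real.sin (((j:ℝ)+1) * (2 * Real.pi / (d+1))))]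
  push_cast at hre him
  exact ⟨by linarith, him⟩

/-- The range of `b_d(x) = ∑ cos x_j + ∑_{j<k} cos(x_j - x_k)` over the real torus,
for `d ≥ 2`, is the closed interval `[-(d+1)/2, d(d+1)/2]`. -/
theorem statement4 (d : ℕ) (hd : 2 ≤ d) :
    Set.range (fun x : Fin d → ℝ =>
        ∑ j, Real.cos (x j)
          + ∑ p ∈ Finset.univ.filter (fun p : Fin d × Fin d => p.1 < p.2),
              Real.cos (x p.1 - x p.2))
      = Set.Icc (-((d : ℝ) + 1) / 2) ((d : ℝ) * ((d : ℝ) + 1) / 2) := by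
  have hcard := card_filter d
  ext y
  simp only [Set.mem_range, Set.mem_Icc]
  constructor
  · rintro ⟨x, rfl⟩
    refine ⟨?_, ?_⟩
    · rw [key]
      have h1 := sq_nonneg (1 + ∑ j, Real.cos (x j))
      have h2 := sq_nonneg (∑ j, Real.sin (x j))
      linarith
    · have hb1 : ∑ j, Real.cos (x j) ≤ d := by
        calc ∑ j, Real.cos (x j) ≤ ∑ _j : Fin d, (1:ℝ) :=
              Finset.sum_le_sum (fun i _ => Real.cos_le_one _)
          _ = d := by simp
      have hb2 : ∑ p ∈ Finset.univ.filter (fun p : Fin d × Fin d => p.1 < p.2),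
          Real.cos (x p.1 - x p.2)
          ≤ ((Finset.univ.filter (fun p : Fin d × Fin d => p.1 < p.2)).card : ℝ) := by
        calc _ ≤ ∑ _p ∈ Finset.univ.filter (fun p : Fin d × Fin d => p.1 < p.2), (1:ℝ) :=
              Finset.sum_le_sum (fun i _ => Real.cos_le_one _)
          _ = _ := by simp
      have : (d:ℝ) * ((d:ℝ)+1)/2 = d + ((d:ℝ)^2 - d)/2 := by ring
      linarith
  · intro hy
    set g : ℝ → (Fin d → ℝ) := fun t j => t * (((j:ℝ)+1) * (2*Real.pi/(d+1))) with hg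
    set f : ℝ → ℝ := fun t => ∑ j, Real.cos (g t j)
        + ∑ p ∈ Finset.univ.filter (fun p : Fin d × Fin d => p.1 < p.2),
            Real.cos (g t p.1 - g t p.2) with hf
    have hcont : Continuous f := by
      apply Continuous.add
      · apply continuous_finset_sum
        intro i _
        fun_prop
      · apply continuous_finset_sum
        intro i _
        fun_prop
    have hf0 : f 0 = (d:ℝ) * ((d:ℝ)+1)/2 := by
      simp only [hf, hg, zero_mul, Real.cos_zero, sub_self, Finset.sum_const, nsmul_eq_mul,
        mul_one, Finset.card_univ, Fintype.card_fin]
      linarith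
    have hf1 : f 1 = -((d:ℝ)+1)/2 := by
      obtain ⟨h1, h2⟩ := roots_sum d (by omega)
      simp only [hf, hg, one_mul]
      rw [key d (fun j : Fin d => ((j:ℝ)+1) * (2*Real.pi/(d+1)))]
      have hC : ∑ j : Fin d, Real.cos (((j:ℝ)+1) * (2*Real.pi/(d+1))) = -1 := by linarith
      rw [hC, h2]
      norm_num
    have hIVT := intermediate_value_Icc' (by norm_num : (0:ℝ) ≤ 1) hcont.continuousOn
    have hy' : y ∈ Set.Icc (f 1) (f 0) := by rw [hf0, hf1]; exact hy
    obtain ⟨t, _, ht⟩ := hIVT hy'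
    exact ⟨g t, ht⟩
end

section
/- If z⁰ ∈ C^d satisfies 1 + Σ_{k≠j} e^{-i z⁰_k} = 0 for every j ∈ {1,...,d}, then e^{-i z⁰_1} = ... = e^{-i z⁰_d} = 1/(1-d), and consequently b_d(z⁰) = d/(2(1-d)). -/
/-- If `z⁰ ∈ ℂ^d` satisfies `1 + ∑_{k ≠ j} e^{-i z⁰_k} = 0` for every `j`, then
`e^{-i z⁰_j} = 1/(1-d)` for all `j`, and consequently `b_d(z⁰) = d/(2(1-d))`. -/
theorem statement6 (d : ℕ) (hd : 2 ≤ d) (z : Fin d → ℂ)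
    (h : ∀ j, (1 : ℂ) + ∑ k ∈ Finset.univ.erase j, Complex.exp (-Complex.I * z k) = 0) :
    (∀ j, Complex.exp (-Complex.I * z j) = 1 / (1 - (d : ℂ)))
    ∧ (∑ j, Complex.cos (z j)
        + ∑ p ∈ Finset.univ.filter (fun p : Fin d × Fin d => p.1 < p.2),
            Complex.cos (z p.1 - z p.2))
      = (d : ℂ) / (2 * (1 - (d : ℂ))) := by
  set w : Fin d → ℂ := fun j => Complex.exp (-Complex.I * z j) with hw
  have hdc : (1 : ℂ) - d ≠ 0 := by
    have h1 : (d : ℂ) ≠ 1 := by exact_mod_cast (by omega : d ≠ 1)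
    exact sub_ne_zero.mpr h1.symm
  have heq : ∀ j k, w j = w k := by
    intro j k
    have hj := h j; have hk := h k
    rw [Finset.sum_erase_eq_sub (Finset.mem_univ j)] at hj
    rw [Finset.sum_erase_eq_sub (Finset.mem_univ k)] at hk
    linear_combination hk - hj
  have j0 : Fin d := ⟨0, by omega⟩
  have hc : ∀ j, w j = 1 / (1 - (d : ℂ)) := by
    have hj0 := h j0
    have hsum : ∑ k ∈ Finset.univ.erase j0, w k = ((d : ℂ) - 1) * w j0 := by
      rw [Finset.sum_congr rfl (fun k _ => heq k j0), Finset.sum_const,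
        Finset.card_erase_of_mem (Finset.mem_univ j0), Finset.card_univ, Fintype.card_fin,
        nsmul_eq_mul, Nat.cast_sub (by omega : 1 ≤ d), Nat.cast_one]
    rw [hsum] at hj0
    intro j
    rw [heq j j0]
    field_simp
    linear_combination -hj0
  refine ⟨hc, ?_⟩
  have hpos : ∀ j, Complex.exp (z j * Complex.I) = 1 - (d : ℂ) := by
    intro j
    have hmul : Complex.exp (z j * Complex.I) * w j = 1 := by
      rw [hw, ← Complex.exp_add]; simp; ring_nf; exact Complex.exp_zero
    rw [hc j] at hmul
    field_simp at hmul
    linear_combination hmul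
  have hneg : ∀ j, Complex.exp (-z j * Complex.I) = 1 / (1 - (d : ℂ)) := by
    intro j
    rw [show -z j * Complex.I = -Complex.I * z j by ring]
    exact hc j
  have hcos : ∀ j, Complex.cos (z j) = ((1 - (d:ℂ)) + 1 / (1 - (d:ℂ))) / 2 := by
    intro j
    rw [Complex.cos, hpos j, hneg j]
  have hcos2 : ∀ j k : Fin d, Complex.cos (z j - z k) = 1 := by
    intro j k
    rw [Complex.cos, show (z j - z k) * Complex.I = z j * Complex.I - z k * Complex.I by ring,
      show -(z j - z k) * Complex.I = z k * Complex.I - z j * Complex.I by ring,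
      Complex.exp_sub, Complex.exp_sub, hpos j, hpos k, div_self hdc]
    norm_num
  set N : ℂ := ∑ p ∈ Finset.univ.filter (fun p : Fin d × Fin d => p.1 < p.2), (1:ℂ) with hNdef
  have key : ∀ j k : Fin d, (if j < k then (1:ℂ) else 0) + (if k < j then 1 else 0)
      = 1 - (if j = k then 1 else 0) := by
    intro j k
    rcases lt_trichotomy j k with h' | h' | h'
    · simp [h', h'.ne, not_lt.mpr h'.le]
    · simp [h']
    · simp [h', h'.ne', not_lt.mpr h'.le]
  have h1 : N = ∑ j : Fin d, ∑ k : Fin d, (if j < k then (1:ℂ) else 0) := by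
    rw [hNdef, Finset.sum_filter, Fintype.sum_prod_type]
  have h2 : N = ∑ j : Fin d, ∑ k : Fin d, (if k < j then (1:ℂ) else 0) := by
    rw [h1]; exact Finset.sum_comm
  have hN : 2 * N = (d:ℂ)^2 - d := by
    calc 2 * N = ∑ j : Fin d, ∑ k : Fin d,
        ((if j < k then (1:ℂ) else 0) + (if k < j then 1 else 0)) := by
          rw [two_mul]
          nth_rewrite 1 [h1]
          nth_rewrite 1 [h2]
          rw [← Finset.sum_add_distrib]
          congr 1; funext j
          rw [← Finset.sum_add_distrib]
      _ = ∑ j : Fin d, ∑ k : Fin d, ((1:ℂ) - if j = k then 1 else 0) := by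
          simp_rw [key]
      _ = (d:ℂ)^2 - d := by
          simp [Finset.sum_sub_distrib, Finset.sum_ite_eq]
          ring
  have hs1 : ∑ j, Complex.cos (z j) = (d:ℂ) * (((1 - (d:ℂ)) + 1 / (1 - (d:ℂ))) / 2) := by
    rw [Finset.sum_congr rfl (fun j _ => hcos j), Finset.sum_const, Finset.card_univ,
      Fintype.card_fin, nsmul_eq_mul]
  have hs2 : ∑ p ∈ Finset.univ.filter (fun p : Fin d × Fin d => p.1 < p.2),
      Complex.cos (z p.1 - z p.2) = N := by
    rw [hNdef]
    exact Finset.sum_congr rfl (fun p _ => hcos2 p.1 p.2)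
  rw [hs1, hs2]
  have hv : (1 - (d:ℂ)) * (1 - (d:ℂ))⁻¹ = 1 := mul_inv_cancel₀ hdc
  rw [eq_div_iff (mul_ne_zero two_ne_zero hdc)]
  linear_combination (1 - (d:ℂ)) * hN + (d:ℂ) * hv
end

section
/- For the Kagome lattice Hamiltonian, det(H_0(x) − λ) = −(λ − 1/2)(λ² + λ/2 − β(x)/8), where β(x) = 1 + cos x_1 + cos x_2 + cos(x_1 − x_2) and H_0(x) is the given 3×3 matrix. In particular, 1/2 is an eigenvalue of H_0(x) for every x. -/
/-!
With `a = e^{ix₁}` and `b = e^{ix₂}`, the matrix `-4 H₀(x)` has zero diagonal and off-diagonal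
pairs `1 + u`, `1 + u⁻¹` for `u = a b⁻¹, a, b`. In `det(-4 H₀(x) + d)` the three pair products
sum to `6 + s` and each of the two cyclic products is `2 + s`, where `s = Σ (u + u⁻¹) = 2(β(x) - 1)`.
So the determinant is `d³ - (6 + s) d + 2 (2 + s)`, which at `d = 4λ` factors as claimed.
-/

open Complex Matrix

section KagomeSymbol

variable {K : Type*} [Field K]

/-- `-4 H₀(x)`, with the phases `e^{ix₁}`, `e^{ix₂}` replaced by arbitrary `a`, `b`. -/
def kagomeSymbol (a b : K) : Matrix (Fin 3) (Fin 3) K :=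
  !![0, 1 + a * b⁻¹, 1 + a;
     1 + (a * b⁻¹)⁻¹, 0, 1 + b;
     1 + a⁻¹, 1 + b⁻¹, 0]

def kagomePhaseSum (a b : K) : K :=
  (a + a⁻¹) + (b + b⁻¹) + (a * b⁻¹ + (a * b⁻¹)⁻¹)

theorem det_kagomeSymbol_add_smul_one {a b : K} (ha : a ≠ 0) (hb : b ≠ 0) (d : K) :
    (kagomeSymbol a b + d • (1 : Matrix (Fin 3) (Fin 3) K)).det
      = d ^ 3 - (6 + kagomePhaseSum a b) * d + 2 * (2 + kagomePhaseSum a b) := by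
  rw [det_fin_three]
  simp only [kagomeSymbol, kagomePhaseSum, Matrix.add_apply, Matrix.smul_apply, one_apply, of_apply, cons_val',
    cons_val_zero, cons_val_one, cons_val, cons_val_fin_one, Fin.isValue, Fin.reduceEq, ↓reduceIte,
    smul_eq_mul, mul_one, mul_zero, zero_add, add_zero]
  field_simp
  ring

end KagomeSymbol

theorem exp_I_mul_add_inv (z : ℂ) : exp (I * z) + (exp (I * z))⁻¹ = 2 * cos z := by
  rw [two_cos, ← exp_neg]; ring_nf

theorem kagomePhaseSum_exp (x₁ x₂ : ℂ) :
    kagomePhaseSum (exp (I * x₁)) (exp (I * x₂)) = 2 * (cos x₁ + cos x₂ + cos (x₁ - x₂)) := by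
  rw [kagomePhaseSum, ← div_eq_mul_inv, ← exp_sub, ← mul_sub, exp_I_mul_add_inv, exp_I_mul_add_inv,
    exp_I_mul_add_inv]
  ring

theorem kagome_matrix_eq_kagomeSymbol (x₁ x₂ : ℂ) :
    !![0, 1 + exp (I * (x₁ - x₂)), 1 + exp (I * x₁);
       1 + exp (-I * (x₁ - x₂)), 0, 1 + exp (I * x₂);
       1 + exp (-I * x₁), 1 + exp (-I * x₂), 0]
      = kagomeSymbol (exp (I * x₁)) (exp (I * x₂)) := by
  simp only [kagomeSymbol, neg_mul, exp_neg, mul_sub, exp_sub, div_eq_mul_inv, mul_inv]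

/-- For the Kagome lattice Hamiltonian `H₀(x)`,
`det(H₀(x) - λ) = -(λ - 1/2)(λ² + λ/2 - β(x)/8)` where
`β(x) = 1 + cos x₁ + cos x₂ + cos(x₁ - x₂)`; in particular `1/2` is an eigenvalue of
`H₀(x)` for every `x`. -/
theorem statement8 (x₁ x₂ : ℝ) (lam : ℂ)
    (H₀ : Matrix (Fin 3) (Fin 3) ℂ)
    (hH₀ : H₀ = (-(1 / 4) : ℂ) •
      !![0, 1 + Complex.exp (Complex.I * ((x₁ : ℂ) - (x₂ : ℂ))),
            1 + Complex.exp (Complex.I * (x₁ : ℂ));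
         1 + Complex.exp (-Complex.I * ((x₁ : ℂ) - (x₂ : ℂ))), 0,
            1 + Complex.exp (Complex.I * (x₂ : ℂ));
         1 + Complex.exp (-Complex.I * (x₁ : ℂ)),
            1 + Complex.exp (-Complex.I * (x₂ : ℂ)), 0]) :
    (H₀ - lam • (1 : Matrix (Fin 3) (Fin 3) ℂ)).det
      = -(lam - 1 / 2) * (lam ^ 2 + lam / 2
          - ((1 : ℂ) + (Real.cos x₁ : ℂ) + (Real.cos x₂ : ℂ) + (Real.cos (x₁ - x₂) : ℂ)) / 8)
    ∧ (H₀ - (1 / 2 : ℂ) • (1 : Matrix (Fin 3) (Fin 3) ℂ)).det = 0 := by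
  have hdet : ∀ μ : ℂ, (H₀ - μ • (1 : Matrix (Fin 3) (Fin 3) ℂ)).det
      = -(μ - 1 / 2) * (μ ^ 2 + μ / 2
          - ((1 : ℂ) + (Real.cos x₁ : ℂ) + (Real.cos x₂ : ℂ) + (Real.cos (x₁ - x₂) : ℂ)) / 8) := by
    intro μ
    have hshift : H₀ - μ • (1 : Matrix (Fin 3) (Fin 3) ℂ) = (-(1 / 4) : ℂ) •
        (kagomeSymbol (exp (I * x₁)) (exp (I * x₂)) + (4 * μ) • (1 : Matrix (Fin 3) (Fin 3) ℂ)) := by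
      rw [hH₀, kagome_matrix_eq_kagomeSymbol, smul_add, smul_smul, sub_eq_add_neg, ← neg_smul]
      ring_nf
    rw [hshift, det_smul, Fintype.card_fin,
      det_kagomeSymbol_add_smul_one (exp_ne_zero _) (exp_ne_zero _), kagomePhaseSum_exp]
    push_cast
    ring
  exact ⟨hdet lam, by rw [hdet]; ring⟩
end

section
/- In the d-dimensional diamond lattice A_d with basis vectors v_i = e_{d+1} − e_i (i = 1,...,d) in R^{d+1} and p = (v_1 + ... + v_d)/(d+1), for any n, n' ∈ Z^d the distance |v(n) − (v(n') + p)| is at least √(d/(d+1)), and equality holds if and only if n − n' is 0 or a standard basis vector e_j of Z^d. -/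
/-!
Put `m = n - n'` and `S = ∑ i, m i`. The vector `v(n) - v(n') - p = ∑ i, (m i - 1/(d+1)) • v i`
has coordinates `1/(d+1) - m i` at the first `d` places and `S - d/(d+1)` at the last, so its
squared length is `d/(d+1) + S (S - 1) + ∑ i, m i (m i - 1)`. For integers `k (k - 1) ≥ 0`, with
equality iff `k ∈ {0, 1}`; and a `0/1`-vector whose sum is `0` or `1` is `0` or a basis vector.
-/

open Finset

section ZeroOneExcess

variable {ι : Type*} [Fintype ι]

lemma Int.mul_sub_one_nonneg (a : ℤ) : 0 ≤ a * (a - 1) := by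
  rcases le_or_gt a 0 with h | h <;> nlinarith

lemma Int.mul_sub_one_eq_zero_iff {a : ℤ} : a * (a - 1) = 0 ↔ a = 0 ∨ a = 1 := by
  rw [mul_eq_zero, sub_eq_zero]

lemma eq_zero_or_eq_single_of_forall_zero_or_one [DecidableEq ι] {m : ι → ℤ}
    (hm : ∀ i, m i = 0 ∨ m i = 1) (hsum : ∑ i, m i = 0 ∨ ∑ i, m i = 1) :
    m = 0 ∨ ∃ j, m = Pi.single j 1 := by
  refine or_iff_not_imp_left.2 fun hne => ?_
  obtain ⟨j, hj⟩ := Function.ne_iff.1 hne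
  have hj1 : m j = 1 := (hm j).resolve_left hj
  refine ⟨j, funext fun i => ?_⟩
  rcases eq_or_ne i j with rfl | hij
  · simp [hj1]
  have hnonneg : ∀ k, 0 ≤ m k := fun k => by rcases hm k with h | h <;> simp [h]
  have hpair : m i + m j ≤ ∑ k, m k := by
    rw [← sum_pair hij]
    exact sum_le_sum_of_subset_of_nonneg (subset_univ _) fun k _ _ => hnonneg k
  rw [Pi.single_eq_of_ne hij]
  rcases hm i with h | h <;> omega

def zeroOneExcess (m : ι → ℤ) : ℤ :=
  (∑ i, m i) * (∑ i, m i - 1) + ∑ i, m i * (m i - 1)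

lemma zeroOneExcess_nonneg (m : ι → ℤ) : 0 ≤ zeroOneExcess m :=
  add_nonneg (Int.mul_sub_one_nonneg _) (sum_nonneg fun i _ => Int.mul_sub_one_nonneg (m i))

lemma zeroOneExcess_eq_zero_iff [DecidableEq ι] {m : ι → ℤ} :
    zeroOneExcess m = 0 ↔ m = 0 ∨ ∃ j, m = Pi.single j 1 := by
  constructor
  · intro h
    obtain ⟨hsum, hterms⟩ := (add_eq_zero_iff_of_nonneg (Int.mul_sub_one_nonneg _)
      (sum_nonneg fun i _ => Int.mul_sub_one_nonneg (m i))).1 h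
    rw [sum_eq_zero_iff_of_nonneg fun i _ => Int.mul_sub_one_nonneg (m i)] at hterms
    exact eq_zero_or_eq_single_of_forall_zero_or_one
      (fun i => Int.mul_sub_one_eq_zero_iff.1 (hterms i (mem_univ i)))
      (Int.mul_sub_one_eq_zero_iff.1 hsum)
  · rintro (rfl | ⟨j, rfl⟩)
    · simp [zeroOneExcess]
    · simp [zeroOneExcess, Pi.single_apply]

end ZeroOneExcess

namespace DiamondLattice

variable {d : ℕ}

noncomputable def basisVec (d : ℕ) (i : Fin d) : EuclideanSpace ℝ (Fin (d + 1)) :=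
  EuclideanSpace.single (Fin.last d) 1 - EuclideanSpace.single i.castSucc 1

lemma basisVec_apply (i : Fin d) (j : Fin (d + 1)) :
    basisVec d i j = (if j = Fin.last d then 1 else 0) - (if j = i.castSucc then 1 else 0) := by
  simp [basisVec, PiLp.single_apply]

lemma linearCombination_basisVec_apply_castSucc (c : Fin d → ℝ) (i : Fin d) :
    Fintype.linearCombination ℝ (basisVec d) c i.castSucc = -c i := by
  simp [Fintype.linearCombination_apply, basisVec_apply, (Fin.castSucc_lt_last _).ne,
    Fin.castSucc_inj]

lemma linearCombination_basisVec_apply_last (c : Fin d → ℝ) :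
    Fintype.linearCombination ℝ (basisVec d) c (Fin.last d) = ∑ i, c i := by
  simp [Fintype.linearCombination_apply, basisVec_apply,
    fun i : Fin d => (Fin.castSucc_lt_last i).ne']

lemma norm_linearCombination_basisVec_sq (c : Fin d → ℝ) :
    ‖Fintype.linearCombination ℝ (basisVec d) c‖ ^ 2 = ∑ i, c i ^ 2 + (∑ i, c i) ^ 2 := by
  simp [EuclideanSpace.norm_sq_eq, Fin.sum_univ_castSucc,
    linearCombination_basisVec_apply_castSucc, linearCombination_basisVec_apply_last]

lemma sum_sq_sub_inv_add_sq_sum (m : Fin d → ℝ) :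
    ∑ i, (m i - 1 / (d + 1)) ^ 2 + (∑ i, (m i - 1 / (d + 1))) ^ 2
      = (∑ i, m i) * (∑ i, m i - 1) + ∑ i, m i * (m i - 1) + d / (d + 1) := by
  have hd : (d : ℝ) + 1 ≠ 0 := by positivity
  simp only [sub_sq, mul_sub, sum_add_distrib, sum_sub_distrib, ← mul_sum, ← sum_mul, sum_const,
    card_univ, Fintype.card_fin, nsmul_eq_mul]
  field_simp
  ring

lemma dist_sq_eq_zeroOneExcess_add (n n' : Fin d → ℤ) :
    let v := Fintype.linearCombination ℝ (basisVec d)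
    dist (v (n · : Fin d → ℝ)) (v (n' · : Fin d → ℝ) + v fun _ => 1 / (d + 1)) ^ 2
      = zeroOneExcess (n - n') + d / (d + 1) := by
  intro v
  rw [dist_eq_norm, sub_add_eq_sub_sub, ← map_sub, ← map_sub,
    norm_linearCombination_basisVec_sq]
  convert sum_sq_sub_inv_add_sq_sum fun i => ((n - n') i : ℝ) using 1
  · simp
  · push_cast [zeroOneExcess]
    rfl

end DiamondLattice

open DiamondLattice in
/-- In the `d`-dimensional diamond lattice `A_d` with basis vectors `vᵢ = e_{d+1} - eᵢ`
and `p = (v₁ + ⋯ + v_d)/(d+1)`: for all `n, n' ∈ ℤ^d`,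
`|v(n) - (v(n') + p)| ≥ √(d/(d+1))`, with equality iff `n - n'` is `0` or a standard
basis vector of `ℤ^d`. -/
theorem statement12 (d : ℕ) (n n' : Fin d → ℤ)
    (v : Fin d → EuclideanSpace ℝ (Fin (d + 1)))
    (hv : ∀ i j, v i j = (if j = Fin.last d then (1 : ℝ) else 0)
        - (if j = Fin.castSucc i then (1 : ℝ) else 0))
    (vec : (Fin d → ℤ) → EuclideanSpace ℝ (Fin (d + 1)))
    (hvec : ∀ m, vec m = ∑ i, (m i : ℝ) • v i)
    (p : EuclideanSpace ℝ (Fin (d + 1)))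
    (hp : p = (1 / ((d : ℝ) + 1)) • ∑ i, v i) :
    Real.sqrt ((d : ℝ) / ((d : ℝ) + 1)) ≤ dist (vec n) (vec n' + p)
    ∧ (dist (vec n) (vec n' + p) = Real.sqrt ((d : ℝ) / ((d : ℝ) + 1)) ↔
        (n = n' ∨ ∃ j : Fin d, ∀ i, n i - n' i = if i = j then 1 else 0)) := by
  obtain rfl : v = basisVec d := funext fun i => by ext j; rw [hv, basisVec_apply]
  obtain rfl : vec = fun m => Fintype.linearCombination ℝ (basisVec d) (m · : Fin d → ℝ) :=
    funext fun m => by rw [hvec, Fintype.linearCombination_apply]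
  obtain rfl : p = Fintype.linearCombination ℝ (basisVec d) fun _ => 1 / (d + 1) := by
    rw [hp, Fintype.linearCombination_apply, smul_sum]
  have hdist := dist_sq_eq_zeroOneExcess_add n n'
  have hexcess : (0 : ℝ) ≤ zeroOneExcess (n - n') := mod_cast zeroOneExcess_nonneg _
  refine ⟨?_, ?_⟩
  · rw [Real.sqrt_le_left dist_nonneg, hdist]
    linarith
  · rw [eq_comm, Real.sqrt_eq_iff_eq_sq (by positivity) dist_nonneg, hdist, right_eq_add,
      Int.cast_eq_zero, zeroOneExcess_eq_zero_iff, sub_eq_zero]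
    simp only [funext_iff, Pi.sub_apply, Pi.single_apply]
end

section
/- For the graphite Hamiltonian, det(H_0(x) − λ) = λ⁴ − ((α(x)+1)/8) λ² + (α(x)−1)²/256, where α(x) = 3 + 2(cos x_1 + cos x_2 + cos(x_1 − x_2)); consequently, the eigenvalues of H_0(x) are ±(√α(x) ± 1)/4. -/
/-!
With `u = conj c` and `v = c`, the matrix `-4 H₀` has the block form `[[A, 1], [1, A]]` with
`A = [[0, u], [v, 0]]`, so its characteristic polynomial is that of `A + 1` times that of `A - 1`,
namely `((μ - 1)² - uv) ((μ + 1)² - uv)`. Since `uv = |c|² = α ≥ 0`, both factors split over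
`√α`, which gives the four eigenvalues `±(√α ± 1)/4`.
-/

open ComplexConjugate

theorem Complex.normSq_one_add_exp_add_exp (x y : ℝ) :
    Complex.normSq (1 + Complex.exp (-Complex.I * x) + Complex.exp (-Complex.I * y)) =
      3 + 2 * (Real.cos x + Real.cos y + Real.cos (x - y)) := by
  simp only [Complex.normSq_apply, Complex.add_re, Complex.add_im, Complex.one_re, Complex.one_im,
    Complex.exp_re, Complex.exp_im, neg_mul, Complex.neg_re, Complex.neg_im, Complex.mul_re,
    Complex.mul_im, Complex.I_re, Complex.I_im, Complex.ofReal_re, Complex.ofReal_im, Real.cos_neg,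
    Real.sin_neg, Real.cos_sub]
  norm_num
  linear_combination Real.sin_sq_add_cos_sq x + Real.sin_sq_add_cos_sq y

def graphiteMatrix {R : Type*} [Zero R] [One R] (u v : R) : Matrix (Fin 4) (Fin 4) R :=
  !![0, u, 1, 0; v, 0, 0, 1; 1, 0, 0, u; 0, 1, v, 0]

theorem det_graphiteMatrix_sub_smul_one {R : Type*} [CommRing R] (u v μ : R) :
    (graphiteMatrix u v - μ • (1 : Matrix (Fin 4) (Fin 4) R)).det =
      ((μ - 1) ^ 2 - u * v) * ((μ + 1) ^ 2 - u * v) := by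
  simp [graphiteMatrix, Matrix.det_succ_row_zero, Fin.sum_univ_succ, Matrix.one_apply, Fin.succAbove]
  ring

theorem det_smul_graphiteMatrix_sub_smul_one {R : Type*} [Field R] [CharZero R] (u v μ : R) :
    ((-(1 / 4) : R) • graphiteMatrix u v - μ • (1 : Matrix (Fin 4) (Fin 4) R)).det =
      ((4 * μ + 1) ^ 2 - u * v) * ((4 * μ - 1) ^ 2 - u * v) / 256 := by
  have hscale : (-(1 / 4) : R) • graphiteMatrix u v - μ • (1 : Matrix (Fin 4) (Fin 4) R) =
      (-(1 / 4) : R) • (graphiteMatrix u v - (-4 * μ) • 1) := by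
    rw [smul_sub, smul_smul]
    congr 2
    field_simp
  rw [hscale, Matrix.det_smul, det_graphiteMatrix_sub_smul_one, Fintype.card_fin]
  field_simp
  ring

theorem sq_sub_sq_mul_sq_sub_sq_eq_zero_iff {K : Type*} [Field K] [CharZero K] (s μ : K) :
    ((4 * μ + 1) ^ 2 - s ^ 2) * ((4 * μ - 1) ^ 2 - s ^ 2) = 0 ↔
      μ = (s + 1) / 4 ∨ μ = (s - 1) / 4 ∨ μ = -((s + 1) / 4) ∨ μ = -((s - 1) / 4) := by
  have hfactor : ((4 * μ + 1) ^ 2 - s ^ 2) * ((4 * μ - 1) ^ 2 - s ^ 2) =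
      256 * ((μ - (s + 1) / 4) * (μ - (s - 1) / 4) * (μ + (s + 1) / 4) * (μ + (s - 1) / 4)) := by
    ring
  rw [hfactor]
  simp only [mul_eq_zero, sub_eq_zero, add_eq_zero_iff_eq_neg, OfNat.ofNat_ne_zero, false_or]
  tauto

/-- For the graphite Hamiltonian `H₀(x)` with `c = 1 + e^{-ix₁} + e^{-ix₂}` and
`α(x) = 3 + 2(cos x₁ + cos x₂ + cos(x₁-x₂))`:
`det(H₀(x) - λ) = λ⁴ - ((α+1)/8) λ² + (α-1)²/256`, and consequently the eigenvalues of
`H₀(x)` are `±(√α ± 1)/4`. -/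
theorem statement16 (x₁ x₂ : ℝ) (c : ℂ)
    (hc : c = 1 + Complex.exp (-Complex.I * (x₁ : ℂ)) + Complex.exp (-Complex.I * (x₂ : ℂ)))
    (α : ℝ) (hα : α = 3 + 2 * (Real.cos x₁ + Real.cos x₂ + Real.cos (x₁ - x₂)))
    (H₀ : Matrix (Fin 4) (Fin 4) ℂ)
    (hH₀ : H₀ = (-(1 / 4) : ℂ) •
      !![0, (starRingEnd ℂ) c, 1, 0;
         c, 0, 0, 1;
         1, 0, 0, (starRingEnd ℂ) c;
         0, 1, c, 0]) :
    (∀ lam : ℂ, (H₀ - lam • (1 : Matrix (Fin 4) (Fin 4) ℂ)).det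
        = lam ^ 4 - ((α : ℂ) + 1) / 8 * lam ^ 2 + ((α : ℂ) - 1) ^ 2 / 256)
    ∧ (∀ μ : ℂ, (H₀ - μ • (1 : Matrix (Fin 4) (Fin 4) ℂ)).det = 0 ↔
        (μ = ((Real.sqrt α : ℂ) + 1) / 4 ∨ μ = ((Real.sqrt α : ℂ) - 1) / 4
          ∨ μ = -(((Real.sqrt α : ℂ) + 1) / 4) ∨ μ = -(((Real.sqrt α : ℂ) - 1) / 4))) := by
  have hα_normSq : α = Complex.normSq c := by
    rw [hα, hc, Complex.normSq_one_add_exp_add_exp]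
  have hconj : conj c * c = α := by
    rw [hα_normSq, Complex.normSq_eq_conj_mul_self]
  have hdet (lam : ℂ) : (H₀ - lam • (1 : Matrix (Fin 4) (Fin 4) ℂ)).det =
      ((4 * lam + 1) ^ 2 - α) * ((4 * lam - 1) ^ 2 - α) / 256 := by
    rw [hH₀, ← hconj]
    exact det_smul_graphiteMatrix_sub_smul_one (conj c) c lam
  have hsqrt : ((Real.sqrt α : ℂ)) ^ 2 = α := by
    rw [← Complex.ofReal_pow, Real.sq_sqrt (hα_normSq ▸ Complex.normSq_nonneg c)]
  refine ⟨fun lam => by rw [hdet]; ring, fun μ => ?_⟩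
  rw [hdet, div_eq_zero_iff, or_iff_left (by norm_num), ← hsqrt]
  exact sq_sub_sq_mul_sq_sub_sq_eq_zero_iff _ μ
end

section
/- Hardy-type inequality: if f ∈ L¹(0,∞) and u(x) = ∫_x^∞ f(t) dt, then for any s > 1/2, ∫_0^∞ x^{2(s−1)} |u(x)|² dx ≤ (4/(2s−1)²) ∫_0^∞ x^{2s} |f(x)|² dx. -/
open MeasureTheory Set
open scoped ENNReal

/-!
Put `c = s - 1/2`. Bounding `‖u x‖` by `∫_x^∞ ‖f‖` and applying Cauchy–Schwarz against the
weight `t^(-c-1)`, whose tail integral is `x^(-c)/c`, gives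
`‖u x‖² ≤ (x^(-c)/c) ∫_x^∞ t^(c+1) ‖f t‖² dt`. Multiplying by `x^(2c-1)` and exchanging the order
of integration, the inner integral `∫_0^t x^(c-1) dx = t^c/c` supplies the second factor `1/c`,
and `1/c² = 4/(2s-1)²`.
-/

theorem ENNReal.lintegral_mul_sq_le {α : Type*} [MeasurableSpace α] {μ : Measure α}
    {φ ψ : α → ℝ≥0∞} (hφ : AEMeasurable φ μ) (hψ : AEMeasurable ψ μ) :
    (∫⁻ a, φ a * ψ a ∂μ) ^ 2 ≤ (∫⁻ a, φ a ^ 2 ∂μ) * ∫⁻ a, ψ a ^ 2 ∂μ := by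
  have h := ENNReal.lintegral_mul_le_Lp_mul_Lq μ .two_two hφ hψ
  simp only [Pi.mul_apply, ENNReal.rpow_two] at h
  calc (∫⁻ a, φ a * ψ a ∂μ) ^ 2
      ≤ ((∫⁻ a, φ a ^ 2 ∂μ) ^ (1 / 2 : ℝ) * (∫⁻ a, ψ a ^ 2 ∂μ) ^ (1 / 2 : ℝ)) ^ 2 := by
        gcongr
    _ = _ := by
        rw [mul_pow, ← ENNReal.rpow_two, ← ENNReal.rpow_two, ← ENNReal.rpow_mul,
          ← ENNReal.rpow_mul]
        norm_num

theorem ENNReal.ofReal_rpow_mul_ofReal_rpow {t : ℝ} (ht : 0 < t) (a b : ℝ) :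
    ENNReal.ofReal (t ^ a) * ENNReal.ofReal (t ^ b) = ENNReal.ofReal (t ^ (a + b)) := by
  rw [← ENNReal.ofReal_mul (Real.rpow_nonneg ht.le _), Real.rpow_add ht]

theorem lintegral_Ioi_ofReal_rpow {c x : ℝ} (hc : 0 < c) (hx : 0 < x) :
    ∫⁻ t in Ioi x, ENNReal.ofReal (t ^ (-c - 1)) = ENNReal.ofReal (x ^ (-c) / c) := by
  rw [← ofReal_integral_eq_lintegral_ofReal (integrableOn_Ioi_rpow_of_lt (by linarith) hx)
      (ae_restrict_of_forall_mem measurableSet_Ioi fun t ht =>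
        Real.rpow_nonneg (hx.trans ht).le _),
    integral_Ioi_rpow_of_lt (by linarith) hx, sub_add_cancel, neg_div_neg_eq]

theorem lintegral_Ioo_zero_ofReal_rpow {c t : ℝ} (hc : 0 < c) (ht : 0 < t) :
    ∫⁻ x in Ioo 0 t, ENNReal.ofReal (x ^ (c - 1)) = ENNReal.ofReal (t ^ c / c) := by
  have hint : IntervalIntegrable (fun x : ℝ => x ^ (c - 1)) volume 0 t :=
    intervalIntegral.intervalIntegrable_rpow' (by linarith)
  rw [intervalIntegrable_iff_integrableOn_Ioo_of_le ht.le] at hint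
  rw [← ofReal_integral_eq_lintegral_ofReal hint
      (ae_restrict_of_forall_mem measurableSet_Ioo fun x hx => Real.rpow_nonneg hx.1.le _),
    ← integral_Ioc_eq_integral_Ioo, ← intervalIntegral.integral_of_le ht.le,
    integral_rpow (.inl (by linarith)), sub_add_cancel, Real.zero_rpow hc.ne', sub_zero]

theorem lintegral_Ioi_mul_lintegral_Ioi_swap {μ : Measure ℝ} [SFinite μ] {a : ℝ} {w g : ℝ → ℝ≥0∞}
    (hw : AEMeasurable w (μ.restrict (Ioi a))) (hg : AEMeasurable g (μ.restrict (Ioi a))) :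
    ∫⁻ x in Ioi a, w x * ∫⁻ t in Ioi x, g t ∂μ ∂μ
      = ∫⁻ t in Ioi a, (∫⁻ x in Ioo a t, w x ∂μ) * g t ∂μ := by
  set H : ℝ → ℝ → ℝ≥0∞ := fun x t => {p : ℝ × ℝ | p.1 < p.2}.indicator
    (fun p => w p.1 * g p.2) (x, t)
  have hH : AEMeasurable (Function.uncurry H) ((μ.restrict (Ioi a)).prod (μ.restrict (Ioi a))) :=
    (hw.comp_fst.mul hg.comp_snd).indicator (measurableSet_lt measurable_fst measurable_snd)
  have inner_t : ∀ x ∈ Ioi a, w x * ∫⁻ t in Ioi x, g t ∂μ = ∫⁻ t in Ioi a, H x t ∂μ := by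
    intro x hx
    have : ∀ t, H x t = (Ioi x).indicator (fun t => w x * g t) t := fun t => by
      simp [H, indicator_apply]
    simp_rw [this]
    rw [lintegral_indicator measurableSet_Ioi, Measure.restrict_restrict measurableSet_Ioi,
      inter_eq_left.mpr (Ioi_subset_Ioi (le_of_lt hx)), lintegral_const_mul'' _
        (hg.mono_set (Ioi_subset_Ioi (le_of_lt hx)))]
  have inner_x : ∀ t ∈ Ioi a, ∫⁻ x in Ioi a, H x t ∂μ = (∫⁻ x in Ioo a t, w x ∂μ) * g t := by
    intro t ht
    have : ∀ x, H x t = (Iio t).indicator (fun x => w x * g t) x := fun x => by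
      simp [H, indicator_apply]
    simp_rw [this]
    rw [lintegral_indicator measurableSet_Iio, Measure.restrict_restrict measurableSet_Iio,
      Iio_inter_Ioi, lintegral_mul_const'' _ (hw.mono_set Ioo_subset_Ioi_self)]
  calc ∫⁻ x in Ioi a, w x * ∫⁻ t in Ioi x, g t ∂μ ∂μ
      = ∫⁻ x in Ioi a, ∫⁻ t in Ioi a, H x t ∂μ ∂μ :=
        setLIntegral_congr_fun measurableSet_Ioi inner_t
    _ = ∫⁻ t in Ioi a, ∫⁻ x in Ioi a, H x t ∂μ ∂μ := lintegral_lintegral_swap hH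
    _ = _ := setLIntegral_congr_fun measurableSet_Ioi inner_x

theorem sq_lintegral_Ioi_le {c x : ℝ} (hc : 0 < c) (hx : 0 < x) {g : ℝ → ℝ≥0∞}
    (hg : AEMeasurable g (volume.restrict (Ioi x))) :
    (∫⁻ t in Ioi x, g t) ^ 2
      ≤ ENNReal.ofReal (x ^ (-c) / c) * ∫⁻ t in Ioi x, ENNReal.ofReal (t ^ (c + 1)) * g t ^ 2 := by
  set φ : ℝ → ℝ≥0∞ := fun t => ENNReal.ofReal (t ^ (-(c + 1) / 2))
  set ψ : ℝ → ℝ≥0∞ := fun t => ENNReal.ofReal (t ^ ((c + 1) / 2)) * g t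
  have hφ : AEMeasurable φ (volume.restrict (Ioi x)) :=
    (measurable_id.pow_const _).ennreal_ofReal.aemeasurable
  have hψ : AEMeasurable ψ (volume.restrict (Ioi x)) :=
    (measurable_id.pow_const _).ennreal_ofReal.aemeasurable.mul hg
  calc (∫⁻ t in Ioi x, g t) ^ 2
      = (∫⁻ t in Ioi x, φ t * ψ t) ^ 2 := by
        congr 1
        refine setLIntegral_congr_fun measurableSet_Ioi fun t ht => ?_
        rw [← mul_assoc, ENNReal.ofReal_rpow_mul_ofReal_rpow (hx.trans ht), neg_div,
          neg_add_cancel, Real.rpow_zero, ENNReal.ofReal_one, one_mul]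
    _ ≤ (∫⁻ t in Ioi x, φ t ^ 2) * ∫⁻ t in Ioi x, ψ t ^ 2 := ENNReal.lintegral_mul_sq_le hφ hψ
    _ = _ := by
        rw [← lintegral_Ioi_ofReal_rpow hc hx]
        congr 1 <;> refine setLIntegral_congr_fun measurableSet_Ioi fun t ht => ?_
        · rw [sq, ENNReal.ofReal_rpow_mul_ofReal_rpow (hx.trans ht)]
          ring_nf
        · rw [mul_pow, sq (ENNReal.ofReal _), ENNReal.ofReal_rpow_mul_ofReal_rpow (hx.trans ht)]
          ring_nf

theorem lintegral_rpow_mul_lintegral_Ioi_sq_le {c : ℝ} (hc : 0 < c) {g : ℝ → ℝ≥0∞}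
    (hg : AEMeasurable g (volume.restrict (Ioi 0))) :
    ∫⁻ x in Ioi 0, ENNReal.ofReal (x ^ (2 * c - 1)) * (∫⁻ t in Ioi x, g t) ^ 2
      ≤ ENNReal.ofReal (1 / c ^ 2) * ∫⁻ t in Ioi 0, ENNReal.ofReal (t ^ (2 * c + 1)) * g t ^ 2 := by
  set G : ℝ → ℝ≥0∞ := fun t => ENNReal.ofReal (t ^ (c + 1)) * g t ^ 2
  have hG : AEMeasurable G (volume.restrict (Ioi 0)) :=
    (measurable_id.pow_const _).ennreal_ofReal.aemeasurable.mul (hg.pow_const 2)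
  calc ∫⁻ x in Ioi 0, ENNReal.ofReal (x ^ (2 * c - 1)) * (∫⁻ t in Ioi x, g t) ^ 2
      ≤ ∫⁻ x in Ioi 0, ENNReal.ofReal (x ^ (2 * c - 1))
          * (ENNReal.ofReal (x ^ (-c) / c) * ∫⁻ t in Ioi x, G t) := by
        refine setLIntegral_mono' measurableSet_Ioi fun x hx => ?_
        gcongr
        exact sq_lintegral_Ioi_le hc hx (hg.mono_set (Ioi_subset_Ioi (le_of_lt hx)))
    _ = ∫⁻ x in Ioi 0, ENNReal.ofReal (1 / c)
          * (ENNReal.ofReal (x ^ (c - 1)) * ∫⁻ t in Ioi x, G t) := by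
        refine setLIntegral_congr_fun measurableSet_Ioi fun x (hx : 0 < x) => ?_
        rw [← mul_assoc, ← mul_assoc, ← ENNReal.ofReal_mul (Real.rpow_nonneg hx.le _),
          ← ENNReal.ofReal_mul (by positivity)]
        congr 2
        rw [show x ^ (2 * c - 1) = x ^ (c - 1) * x ^ c by rw [← Real.rpow_add hx]; ring_nf,
          Real.rpow_neg hx.le]
        field_simp
    _ = ENNReal.ofReal (1 / c) * ∫⁻ t in Ioi 0, ENNReal.ofReal (t ^ c / c) * G t := by
        rw [lintegral_const_mul' _ _ ENNReal.ofReal_ne_top,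
          lintegral_Ioi_mul_lintegral_Ioi_swap (by fun_prop) hG]
        congr 1
        exact setLIntegral_congr_fun measurableSet_Ioi fun t ht => by
          rw [lintegral_Ioo_zero_ofReal_rpow hc ht]
    _ = ENNReal.ofReal (1 / c) * ∫⁻ t in Ioi 0,
          ENNReal.ofReal (1 / c) * (ENNReal.ofReal (t ^ (2 * c + 1)) * g t ^ 2) := by
        congr 1
        refine setLIntegral_congr_fun measurableSet_Ioi fun t (ht : 0 < t) => ?_
        rw [← mul_assoc, ← mul_assoc, ← ENNReal.ofReal_mul (by positivity),
          ← ENNReal.ofReal_mul (by positivity)]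
        congr 2
        rw [show t ^ (2 * c + 1) = t ^ c * t ^ (c + 1) by rw [← Real.rpow_add ht]; ring_nf]
        ring
    _ = _ := by
        rw [lintegral_const_mul' _ _ ENNReal.ofReal_ne_top, ← mul_assoc,
          ← ENNReal.ofReal_mul (by positivity)]
        ring_nf

/-- Hardy-type inequality: if `f ∈ L¹(0,∞)` and `u(x) = ∫_x^∞ f(t) dt`, then for any
`s > 1/2`, `∫_0^∞ x^{2(s-1)} |u(x)|² dx ≤ (4/(2s-1)²) ∫_0^∞ x^{2s} |f(x)|² dx`. -/
theorem statement17 (f : ℝ → ℂ) (hf : IntegrableOn f (Set.Ioi 0))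
    (u : ℝ → ℂ) (hu : ∀ x : ℝ, u x = ∫ t in Set.Ioi x, f t)
    (s : ℝ) (hs : 1 / 2 < s) :
    ∫⁻ x in Set.Ioi (0 : ℝ), ENNReal.ofReal (x ^ (2 * (s - 1)) * ‖u x‖ ^ 2)
      ≤ ENNReal.ofReal (4 / (2 * s - 1) ^ 2)
        * ∫⁻ x in Set.Ioi (0 : ℝ), ENNReal.ofReal (x ^ (2 * s) * ‖f x‖ ^ 2) := by
  have hc : 0 < s - 1 / 2 := by linarith
  have ofReal_mul_norm_sq {z : ℂ} (a : ℝ) :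
      ENNReal.ofReal (a * ‖z‖ ^ 2) = ENNReal.ofReal a * ‖z‖ₑ ^ 2 := by
    rw [ENNReal.ofReal_mul' (by positivity), ENNReal.ofReal_pow (norm_nonneg _), ofReal_norm]
  rw [show 4 / (2 * s - 1) ^ 2 = 1 / (s - 1 / 2) ^ 2 by field_simp; ring,
    show 2 * (s - 1) = 2 * (s - 1 / 2) - 1 by ring, show 2 * s = 2 * (s - 1 / 2) + 1 by ring]
  simp only [ofReal_mul_norm_sq]
  calc ∫⁻ x in Ioi 0, ENNReal.ofReal (x ^ (2 * (s - 1 / 2) - 1)) * ‖u x‖ₑ ^ 2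
      ≤ ∫⁻ x in Ioi 0,
          ENNReal.ofReal (x ^ (2 * (s - 1 / 2) - 1)) * (∫⁻ t in Ioi x, ‖f t‖ₑ) ^ 2 := by
        gcongr with x
        rw [hu]
        exact enorm_integral_le_lintegral_enorm _
    _ ≤ _ := lintegral_rpow_mul_lintegral_Ioi_sq_le hc hf.aestronglyMeasurable.enorm
end
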